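/- For binary strings a, b of length n encoded to DNA strings u, v of length nℓ via the recursive encoding, one has ⌈d_H(a,b)/2⌉ ≤ d_H(u,v)/ℓ ≤ n − ⌊d_H(a,b)/2⌋. -/
import Mathlib

/-- Watson–Crick complement on `{A,C,G,T} = {0,1,2,3}`: swaps `0↔3`, `1↔2`. -/
def dnaCompl (x : Fin 4) : Fin 4 := 3 - x

/-- Coordinatewise complement of a DNA block of length `ℓ`. -/
def blkCompl {ℓ : ℕ} (z : Fin ℓ → Fin 4) : Fin ℓ → Fin 4 := fun i => dnaCompl (z i)

/-- The map `f` of the recursive encoding: `f(x,0)=y`, `f(x,1)=y^c`,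
`f(x^c,0)=y^c`, `f(x^c,1)=y`, `f(y,0)=x^c`, `f(y,1)=x`, `f(y^c,0)=x`,
`f(y^c,1)=x^c`. -/
def fmap {ℓ : ℕ} (x y z : Fin ℓ → Fin 4) (c : Bool) : Fin ℓ → Fin 4 :=
  if z = x then (if c then blkCompl y else y)
  else if z = blkCompl x then (if c then y else blkCompl y)
  else if z = y then (if c then x else blkCompl x)
  else (if c then blkCompl x else x)

/-- The recursive block encoding of a binary string: `u 0 = h(a_1)` with
`h(0) = x`, `h(1) = x^c`, and `u (i+1) = f(u i, a_{i+1})`. -/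
def enc {ℓ : ℕ} (x y : Fin ℓ → Fin 4) (a : ℕ → Bool) : ℕ → (Fin ℓ → Fin 4)
  | 0 => if a 0 then blkCompl x else x
  | i + 1 => fmap x y (enc x y a i) (a (i + 1))

lemma dnaCompl_invol : ∀ t : Fin 4, dnaCompl (dnaCompl t) = t := by decide

lemma dnaCompl_ne : ∀ t : Fin 4, dnaCompl t ≠ t := by decide

lemma blkCompl_blkCompl {ℓ : ℕ} (z : Fin ℓ → Fin 4) : blkCompl (blkCompl z) = z :=
  funext fun i => dnaCompl_invol _

lemma blkCompl_ne {ℓ : ℕ} (hℓ : 0 < ℓ) (z : Fin ℓ → Fin 4) : blkCompl z ≠ z := by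
  intro h; exact dnaCompl_ne _ (congrFun h ⟨0, hℓ⟩)

lemma blkCompl_inj {ℓ : ℕ} {z w : Fin ℓ → Fin 4} (h : blkCompl z = blkCompl w) : z = w := by
  have := congrArg blkCompl h
  rwa [blkCompl_blkCompl, blkCompl_blkCompl] at this

lemma hammingDist_blkCompl {ℓ : ℕ} (z : Fin ℓ → Fin 4) : hammingDist z (blkCompl z) = ℓ := by
  have h : ∀ i, z i ≠ blkCompl z i := fun i => (dnaCompl_ne (z i)).symm
  simp [hammingDist, Finset.filter_true_of_mem fun i _ => h i]

lemma fmap_not {ℓ : ℕ} (x y z : Fin ℓ → Fin 4) (c : Bool) :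
    fmap x y z (!c) = blkCompl (fmap x y z c) := by
  cases c <;> simp only [Bool.not_false, Bool.not_true] <;> unfold fmap <;>
    split_ifs <;> simp_all [blkCompl_blkCompl]

lemma encMem {ℓ : ℕ} (x y : Fin ℓ → Fin 4) (a : ℕ → Bool) (j : ℕ) :
    enc x y a j = x ∨ enc x y a j = blkCompl x ∨ enc x y a j = y ∨ enc x y a j = blkCompl y := by
  cases j with
  | zero => by_cases h : a 0 <;> simp [enc, h]
  | succ i =>
    simp only [enc]
    cases a (i+1) <;> unfold fmap <;> split_ifs <;> simp

lemma fmap_compl {ℓ : ℕ} (hℓ : 0 < ℓ) (x y z : Fin ℓ → Fin 4)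
    (hxy : x ≠ y) (hxyc : x ≠ blkCompl y)
    (hz : z = x ∨ z = blkCompl x ∨ z = y ∨ z = blkCompl y) (c : Bool) :
    fmap x y (blkCompl z) c = blkCompl (fmap x y z c) := by
  have h1 : blkCompl x ≠ x := blkCompl_ne hℓ x
  have h2 : blkCompl y ≠ y := blkCompl_ne hℓ y
  have h3 : blkCompl x ≠ y := fun h => hxyc (by rw [← h, blkCompl_blkCompl])
  have h4 : blkCompl x ≠ blkCompl y := fun h => hxy (blkCompl_inj h)
  have h5 : y ≠ x := hxy.symm
  have h6 : blkCompl y ≠ x := fun h => hxyc h.symm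
  rcases hz with rfl | rfl | rfl | rfl <;> cases c <;>
    unfold fmap <;>
    simp [blkCompl_blkCompl, h1, h2, h3, h4, h5, h6, h3.symm, h4.symm]

lemma filter_card_succ (p : ℕ → Prop) [DecidablePred p] (m : ℕ) :
    ((Finset.range (m+1)).filter p).card
      = ((Finset.range m).filter p).card + (if p m then 1 else 0) := by
  rw [Finset.range_add_one, Finset.filter_insert]
  split_ifs with h
  · rw [Finset.card_insert_of_notMem (by simp)]
  · simp

lemma encRel {ℓ : ℕ} (hℓ : 0 < ℓ) (x y : Fin ℓ → Fin 4)
    (hxy : x ≠ y) (hxyc : x ≠ blkCompl y) (a b : ℕ → Bool) (j : ℕ) :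
    enc x y b j =
      if Odd (((Finset.range (j+1)).filter (fun i => a i ≠ b i)).card)
      then blkCompl (enc x y a j) else enc x y a j := by
  induction j with
  | zero =>
    cases ha : a 0 <;> cases hb : b 0 <;>
      simp [enc, ha, hb, Finset.range_one, Finset.filter_singleton, blkCompl_blkCompl]
  | succ j ih =>
    rw [filter_card_succ]
    by_cases hab : a (j+1) = b (j+1)
    · have he0 : (if a (j+1) ≠ b (j+1) then 1 else 0) = 0 := if_neg (by simpa using hab)
      rw [he0]
      simp only [Nat.add_zero]
      by_cases hodd : Odd (((Finset.range (j+1)).filter (fun i => a i ≠ b i)).card)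
      · rw [if_pos hodd]
        show fmap x y (enc x y b j) (b (j+1)) = blkCompl (fmap x y (enc x y a j) (a (j+1)))
        rw [ih, if_pos hodd, ← hab]
        exact fmap_compl hℓ x y _ hxy hxyc (encMem x y a j) _
      · rw [if_neg hodd]
        show fmap x y (enc x y b j) (b (j+1)) = fmap x y (enc x y a j) (a (j+1))
        rw [ih, if_neg hodd, ← hab]
    · have he1 : (if a (j+1) ≠ b (j+1) then 1 else 0) = 1 := if_pos hab
      rw [he1]
      have hb : b (j+1) = !(a (j+1)) := by
        cases h1 : a (j+1) <;> cases h2 : b (j+1) <;> simp_all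
      by_cases hodd : Odd (((Finset.range (j+1)).filter (fun i => a i ≠ b i)).card)
      · have h2 : ¬ Odd (((Finset.range (j+1)).filter (fun i => a i ≠ b i)).card + 1) := by
          rw [Nat.odd_iff] at hodd ⊢; omega
        rw [if_neg h2]
        show fmap x y (enc x y b j) (b (j+1)) = fmap x y (enc x y a j) (a (j+1))
        rw [ih, if_pos hodd, hb, fmap_not,
          fmap_compl hℓ x y _ hxy hxyc (encMem x y a j), blkCompl_blkCompl]
      · have h2 : Odd (((Finset.range (j+1)).filter (fun i => a i ≠ b i)).card + 1) := by
          rw [Nat.odd_iff] at hodd ⊢; omega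
        rw [if_pos h2]
        show fmap x y (enc x y b j) (b (j+1)) = blkCompl (fmap x y (enc x y a j) (a (j+1)))
        rw [ih, if_neg hodd, hb, fmap_not]

/-- For binary strings `a, b` of length `n` encoded to DNA strings of length
`nℓ`, the Hamming distance `D` of the encodings satisfies
`⌈d_H(a,b)/2⌉ ≤ D/ℓ ≤ n − ⌊d_H(a,b)/2⌋` (stated multiplied through by `ℓ`). -/
theorem enc_hammingDist_bounds {ℓ n : ℕ} (hℓ : 0 < ℓ) (x y : Fin ℓ → Fin 4)
    (hxy : x ≠ y) (hxyc : x ≠ blkCompl y) (a b : ℕ → Bool) :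
    ℓ * ((((Finset.range n).filter (fun i => a i ≠ b i)).card + 1) / 2) ≤
        ∑ j ∈ Finset.range n, hammingDist (enc x y a j) (enc x y b j) ∧
      ∑ j ∈ Finset.range n, hammingDist (enc x y a j) (enc x y b j) ≤
        ℓ * (n - ((Finset.range n).filter (fun i => a i ≠ b i)).card / 2) := by
  have hd : ∀ j, hammingDist (enc x y a j) (enc x y b j)
      = ℓ * (if Odd (((Finset.range (j+1)).filter (fun i => a i ≠ b i)).card) then 1 else 0) := by
    intro j
    rw [encRel hℓ x y hxy hxyc a b j]
    split_ifs
    · rw [mul_one]; exact hammingDist_blkCompl _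
    · rw [mul_zero]; exact hammingDist_self _
  rw [Finset.sum_congr rfl fun j _ => hd j, ← Finset.mul_sum]
  have key : ∀ m : ℕ,
      ((((Finset.range m).filter (fun i => a i ≠ b i)).card + 1) / 2) ≤
        (∑ j ∈ Finset.range m,
          (if Odd (((Finset.range (j+1)).filter (fun i => a i ≠ b i)).card) then 1 else 0)) ∧
      (∑ j ∈ Finset.range m,
          (if Odd (((Finset.range (j+1)).filter (fun i => a i ≠ b i)).card) then 1 else 0)) ≤
        m - ((Finset.range m).filter (fun i => a i ≠ b i)).card / 2 := by
    intro m
    induction m with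
    | zero => simp
    | succ m ih =>
      obtain ⟨ih1, ih2⟩ := ih
      rw [Finset.sum_range_succ, filter_card_succ]
      have hO : ∀ k : ℕ, (if Odd k then (1:ℕ) else 0) = k % 2 := by
        intro k
        by_cases h : Odd k
        · rw [if_pos h, Nat.odd_iff.mp h]
        · rw [if_neg h, Nat.even_iff.mp (Nat.not_odd_iff_even.mp h)]
      have hcard : ((Finset.range m).filter (fun i => a i ≠ b i)).card ≤ m :=
        le_trans (Finset.card_filter_le _ _) (by simp)
      by_cases hab : a m ≠ b m
      · have he1 : (if a m ≠ b m then 1 else 0) = 1 := if_pos hab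
        rw [he1, hO]
        constructor <;> omega
      · have he0 : (if a m ≠ b m then 1 else 0) = 0 := if_neg hab
        rw [he0, hO]
        constructor <;> omega
  constructor
  · exact Nat.mul_le_mul_left ℓ (key n).1
  · exact Nat.mul_le_mul_left ℓ (key n).2
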